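/- Let E₁(t), E₂(t) ∈ K[[t]] be determined by the conditions: E₁'(t) = −3(F(t)/(t−1) − F(t)^σ · d(t^σ)/dt · p^{−1}/(t^σ−1)) with E₁(0) = 0, and E₂'(t) = −E₁(t)·q'/q − 3F(t)^σ · τ^{(σ)}(t) · p^{−1} d(t^σ)/dt /(t^σ−1) with E₂(0) = −9·ln₂^{(p)}(−ν), where ν = (−1+√−3)/2. Then E₁ and E₂ are well-defined: the first ODE has a unique power-series solution with E₁(0)=0 lying in K[[t]], E₁ ∈ tK[[t]], and given E₁ ∈ tK[[t]] the right side of the second equation has no dt/t-residue at t=0, so E₂ is determined in K[[t]] up to the prescribed constant term. -/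

import Mathlib

/-!
Over a `ℚ`-algebra every power series has a unique antiderivative with any prescribed
constant term, which gives `E₁` and `E₂` once their right-hand sides are power series.
For the second equation this is the residue condition: `q = t·u` with `u` a unit, so
`q'/q = 1/t + u'/u`, and `-E₁·q'/q` is regular at `t = 0` exactly when `E₁(0) = 0`.
-/

open PowerSeries

/-- `F = (1/(2s))·₂F₁(1/3, 2/3; 1; t)` where `s = √-3`. -/
noncomputable def hypFs (K : Type*) [Field K] [CharZero K] (s : K) : PowerSeries K :=
  PowerSeries.mk fun n =>
    (2 * s)⁻¹ * ((ascPochhammer K n).eval (3⁻¹) * (ascPochhammer K n).eval (2 / 3)) /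
      ((n.factorial : K) * (n.factorial : K))

namespace PowerSeries

section Antiderivative

variable {R : Type*} [CommRing R] [Algebra ℚ R]

noncomputable def antiderivative (f : R⟦X⟧) (a : R) : R⟦X⟧ :=
  C a + X * mk fun n => (n + 1 : ℚ)⁻¹ • coeff n f

theorem derivative_antiderivative (f : R⟦X⟧) (a : R) :
    derivative R (antiderivative f a) = f := by
  ext n
  have hn : ((n : R) + 1) = algebraMap ℚ R (n + 1) := by simp
  rw [coeff_derivative, antiderivative, map_add, coeff_C, if_neg n.succ_ne_zero, zero_add,
    coeff_succ_X_mul, coeff_mk, hn, Algebra.smul_def, mul_right_comm, ← map_mul,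
    inv_mul_cancel₀ (by positivity), map_one, one_mul]

theorem constantCoeff_antiderivative (f : R⟦X⟧) (a : R) :
    constantCoeff (antiderivative f a) = a := by
  simp [antiderivative]

theorem existsUnique_derivative_eq_and_constantCoeff_eq (f : R⟦X⟧) (a : R) :
    ∃! E : R⟦X⟧, derivative R E = f ∧ constantCoeff E = a := by
  have := IsAddTorsionFree.of_module_rat R
  refine ⟨antiderivative f a, ⟨derivative_antiderivative f a, constantCoeff_antiderivative f a⟩,
    fun E ⟨hE, hE0⟩ => derivative.ext ?_ ?_⟩
  · rw [hE, derivative_antiderivative]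
  · rw [hE0, constantCoeff_antiderivative]

end Antiderivative

theorem X_mul_dvd_of_X_dvd {R : Type*} [CommRing R] {u f : R⟦X⟧}
    (hu : IsUnit (constantCoeff u)) (hf : X ∣ f) : X * u ∣ f :=
  (IsUnit.mul_right_dvd (isUnit_iff_constantCoeff.2 hu)).2 hf

end PowerSeries

theorem E1_E2_well_defined_general
    (p : ℕ)
    (K : Type*) [Field K] [CharZero K]
    (s : K)
    (c : K)
    -- the Frobenius `σ` with `σ(t) = c·t^p`:
    (S : PowerSeries K →+* PowerSeries K)
    -- the Tate period `q = t·u`, `u(0) = 1/27`: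
    (u : PowerSeries K) (hu : constantCoeff u = (27 : K)⁻¹)
    (q : PowerSeries K) (hq : q = X * u)
    -- `τ^{(σ)} = p⁻¹ log(q^p/q^σ)` and the constant `κ = -9·ln₂^{(p)}(-ν)`:
    (τ : PowerSeries K) (κ : K) :
    -- the first equation has a unique power-series solution with `E₁(0) = 0` …
    (∃! E₁ : PowerSeries K,
      derivative K E₁ =
        -(3 : PowerSeries K) * (hypFs K s * (X - 1)⁻¹ -
          S (hypFs K s) * (C (p : K)⁻¹ * derivative K (C c * X ^ p)) *
            (C c * X ^ p - 1)⁻¹) ∧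
      constantCoeff E₁ = 0) ∧
    -- … and for any such `E₁` (automatically `E₁ ∈ tK[[t]]`), the right-hand side of the
    -- second equation has no `dt/t` residue at `t = 0`, so `E₂` is determined in `K[[t]]`
    -- by the prescribed constant term:
    (∀ E₁ : PowerSeries K,
      derivative K E₁ =
        -(3 : PowerSeries K) * (hypFs K s * (X - 1)⁻¹ -
          S (hypFs K s) * (C (p : K)⁻¹ * derivative K (C c * X ^ p)) *
            (C c * X ^ p - 1)⁻¹) →
      constantCoeff E₁ = 0 →
      ∃ g : PowerSeries K,
        q * g = -(E₁ * derivative K q) -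
          q * ((3 : PowerSeries K) * S (hypFs K s) * τ *
            (C (p : K)⁻¹ * derivative K (C c * X ^ p)) * (C c * X ^ p - 1)⁻¹) ∧
        ∃! E₂ : PowerSeries K, derivative K E₂ = g ∧ constantCoeff E₂ = κ) := by
  refine ⟨existsUnique_derivative_eq_and_constantCoeff_eq _ 0, fun E₁ _ hE₁0 => ?_⟩
  have hu_unit : IsUnit (constantCoeff u) := by rw [hu]; exact (inv_ne_zero (by norm_num)).isUnit
  have hX_dvd_E₁ : (X : PowerSeries K) ∣ E₁ := X_dvd_iff.2 hE₁0
  obtain ⟨g, hg⟩ : q ∣ -(E₁ * derivative K q) -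
      q * ((3 : PowerSeries K) * S (hypFs K s) * τ *
        (C (p : K)⁻¹ * derivative K (C c * X ^ p)) * (C c * X ^ p - 1)⁻¹) := by
    rw [hq]
    exact X_mul_dvd_of_X_dvd hu_unit
      (dvd_sub (dvd_neg.2 (hX_dvd_E₁.mul_right _)) ((dvd_mul_right X u).mul_right _))
  exact ⟨g, hg.symm, existsUnique_derivative_eq_and_constantCoeff_eq g κ⟩

theorem E1_E2_well_defined
    (p : ℕ) (hp : p.Prime)
    (K : Type*) [Field K] [CharZero K]
    (s : K) (hs : s * s = -3)
    (c : K) (hc : c ≠ 0)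
    -- the Frobenius `σ` with `σ(t) = c·t^p`:
    (S : PowerSeries K →+* PowerSeries K)
    (hSX : S X = C c * X ^ p) (hSC : ∀ a : K, S (C a) = C a)
    -- the Tate period `q = t·u`, `u(0) = 1/27`:
    (u : PowerSeries K) (hu : constantCoeff u = (27 : K)⁻¹)
    (q : PowerSeries K) (hq : q = X * u)
    -- `τ^{(σ)} = p⁻¹ log(q^p/q^σ)` and the constant `κ = -9·ln₂^{(p)}(-ν)`:
    (τ : PowerSeries K) (κ : K) :
    -- the first equation has a unique power-series solution with `E₁(0) = 0` …
    (∃! E₁ : PowerSeries K,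
      derivative K E₁ =
        -(3 : PowerSeries K) * (hypFs K s * (X - 1)⁻¹ -
          S (hypFs K s) * (C (p : K)⁻¹ * derivative K (C c * X ^ p)) *
            (C c * X ^ p - 1)⁻¹) ∧
      constantCoeff E₁ = 0) ∧
    -- … and for any such `E₁` (automatically `E₁ ∈ tK[[t]]`), the right-hand side of the
    -- second equation has no `dt/t` residue at `t = 0`, so `E₂` is determined in `K[[t]]`
    -- by the prescribed constant term:
    (∀ E₁ : PowerSeries K,
      derivative K E₁ =
        -(3 : PowerSeries K) * (hypFs K s * (X - 1)⁻¹ -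
          S (hypFs K s) * (C (p : K)⁻¹ * derivative K (C c * X ^ p)) *
            (C c * X ^ p - 1)⁻¹) →
      constantCoeff E₁ = 0 →
      ∃ g : PowerSeries K,
        q * g = -(E₁ * derivative K q) -
          q * ((3 : PowerSeries K) * S (hypFs K s) * τ *
            (C (p : K)⁻¹ * derivative K (C c * X ^ p)) * (C c * X ^ p - 1)⁻¹) ∧
        ∃! E₂ : PowerSeries K, derivative K E₂ = g ∧ constantCoeff E₂ = κ) :=
  E1_E2_well_defined_general p K s c S u hu q hq τ κ
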